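/- Let M_1,…,M_N be real d×d matrices and U₀ an exact joint triangularizer of {M_n}. Then for all skew-symmetric d×d matrices X and Y with ‖Y‖ = 1: |Σ_{n=1}^N Tr( low([U₀ᵀ M_n U₀, X])ᵀ · low([[U₀ᵀ M_n U₀, Y], X]) )| ≤ 8 ‖X‖² Σ_{n=1}^N ‖M_n‖², and |Σ_{n=1}^N Tr( low([[U₀ᵀ M_n U₀, X], X])ᵀ · low([U₀ᵀ M_n U₀, Y]) )| ≤ 8 ‖X‖² Σ_{n=1}^N ‖M_n‖². -/

import Mathlib

open Matrix Kronecker BigOperators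

noncomputable section

/-- Square real matrices. -/
abbrev Mat (d : ℕ) := Matrix (Fin d) (Fin d) ℝ

/-- Strictly lower-triangular part: `[low A]_{ij} = A_{ij}` if `i > j`, else `0`. -/
def lowPart {d : ℕ} (A : Mat d) : Mat d :=
  Matrix.of fun i j => if (j : ℕ) < (i : ℕ) then A i j else 0

/-- Frobenius norm. -/
def frob {m n : Type*} [Fintype m] [Fintype n] (A : Matrix m n ℝ) : ℝ :=
  Real.sqrt (∑ i, ∑ j, (A i j) ^ 2)

/-- Euclidean norm of a vector. -/
def vecNorm2 {m : Type*} [Fintype m] (v : m → ℝ) : ℝ :=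
  Real.sqrt (∑ i, (v i) ^ 2)

/-- Largest singular value. -/
def sigMax {m n : Type*} [Fintype m] [Fintype n] (A : Matrix m n ℝ) : ℝ :=
  sSup {r | ∃ x : n → ℝ, vecNorm2 x = 1 ∧ r = vecNorm2 (A.mulVec x)}

/-- Smallest singular value. -/
def sigMin {m n : Type*} [Fintype m] [Fintype n] (A : Matrix m n ℝ) : ℝ :=
  sInf {r | ∃ x : n → ℝ, vecNorm2 x = 1 ∧ r = vecNorm2 (A.mulVec x)}

/-- Spectral norm (largest singular value). -/
def specNorm {m n : Type*} [Fintype m] [Fintype n] (A : Matrix m n ℝ) : ℝ := sigMax A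

/-- Condition number `κ(A) = σ_max(A)/σ_min(A)`. -/
def condNum {m n : Type*} [Fintype m] [Fintype n] (A : Matrix m n ℝ) : ℝ :=
  sigMax A / sigMin A

/-- Matrix exponential. -/
def matExp {d : ℕ} (A : Mat d) : Mat d := ∑' k : ℕ, ((k.factorial : ℝ))⁻¹ • A ^ k

/-- Column-wise vectorization: index `(j, i)` holds the `(i, j)` entry. -/
def vecM {d : ℕ} (A : Mat d) : Fin d × Fin d → ℝ := fun p => A p.2 p.1

/-- Inverse of the column-wise vectorization. -/
def matM {d : ℕ} (v : Fin d × Fin d → ℝ) : Mat d := Matrix.of fun i j => v (j, i)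

/-- The `d² × d²` diagonal 0/1 matrix `Low` with `Low (vec A) = vec (low A)`. -/
def lowOp (d : ℕ) : Matrix (Fin d × Fin d) (Fin d × Fin d) ℝ :=
  Matrix.diagonal fun p => if (p.1 : ℕ) < (p.2 : ℕ) then 1 else 0

/-- `P` is a valid `P_low` projector: `P Pᵀ = 1` and `Pᵀ P = Low`. -/
def IsPlow {d k : ℕ} (P : Matrix (Fin k) (Fin d × Fin d) ℝ) : Prop :=
  P * Pᵀ = 1 ∧ Pᵀ * P = lowOp d

/-- Orthogonal matrix. -/
def IsOrtho {d : ℕ} (U : Mat d) : Prop := Uᵀ * U = 1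

/-- Skew-symmetric matrix. -/
def IsSkew {d : ℕ} (X : Mat d) : Prop := Xᵀ = -X

/-- Matrix commutator. -/
def mcomm {d : ℕ} (A B : Mat d) : Mat d := A * B - B * A

/-- `U₀` is an exact joint triangularizer of the family `M`. -/
def ExactTriang {d N : ℕ} (U₀ : Mat d) (M : Fin N → Mat d) : Prop :=
  IsOrtho U₀ ∧ ∀ n, lowPart (U₀ᵀ * M n * U₀) = 0

/-- The joint triangularization loss `L(U) = Σₙ ‖low(Uᵀ M̂ₙ U)‖²`. -/
def Loss {d N : ℕ} (Mh : Fin N → Mat d) (U : Mat d) : ℝ :=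
  ∑ n, (frob (lowPart (Uᵀ * Mh n * U))) ^ 2

/-- Stationary point of the loss on the orthogonal group: the Riemannian
gradient vanishes, i.e. all directional derivatives along skew directions vanish. -/
def IsStationaryOrth {d N : ℕ} (Mh : Fin N → Mat d) (U : Mat d) : Prop :=
  IsOrtho U ∧ ∀ X : Mat d, IsSkew X →
    deriv (fun t : ℝ => Loss Mh (U * matExp (t • X))) 0 = 0

/-- The operator `t̃ = P_low (1 ⊗ Aᵀ − A ⊗ 1) P_lowᵀ`. -/
def ttil {d k : ℕ} (P : Matrix (Fin k) (Fin d × Fin d) ℝ) (A : Mat d) :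
    Matrix (Fin k) (Fin k) ℝ :=
  P * ((1 : Mat d) ⊗ₖ Aᵀ - A ⊗ₖ (1 : Mat d)) * Pᵀ

/-- The joint eigengap `γ = min_{i<i'} Σₙ (Λ_{ni} − Λ_{ni'})²`. -/
def gapMin {d N : ℕ} (Λ : Fin N → Fin d → ℝ) : ℝ :=
  sInf {r | ∃ i i' : Fin d, i < i' ∧ r = ∑ n, (Λ n i - Λ n i') ^ 2}

/-
Conjugation by an orthogonal matrix preserves the Frobenius norm, taking the strictly lower
part does not increase it, and the norm is submultiplicative, so `‖[A, B]‖ ≤ 2‖A‖‖B‖`.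
Together with Cauchy–Schwarz, `|Tr(Aᵀ B)| ≤ ‖A‖‖B‖`, each summand is at most
`2‖Mₙ‖‖X‖ · 4‖Mₙ‖‖Y‖‖X‖ = 8‖X‖²‖Mₙ‖²`.
-/

section Frobenius

variable {l m n : Type*} [Fintype l] [Fintype m] [Fintype n]

attribute [local instance] Matrix.frobeniusNormedAddCommGroup

lemma frob_eq_norm (A : Matrix m n ℝ) : frob A = ‖A‖ := by
  simp only [frob, frobenius_norm_def, Real.sqrt_eq_rpow, Real.norm_eq_abs, Real.rpow_two,
    sq_abs]

lemma frob_nonneg (A : Matrix m n ℝ) : 0 ≤ frob A :=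
  Real.sqrt_nonneg _

lemma frob_sub_le (A B : Matrix m n ℝ) : frob (A - B) ≤ frob A + frob B := by
  simpa only [frob_eq_norm] using norm_sub_le A B

lemma frob_mul_le (A : Matrix l m ℝ) (B : Matrix m n ℝ) : frob (A * B) ≤ frob A * frob B := by
  simpa only [frob_eq_norm] using frobenius_norm_mul A B

lemma trace_transpose_mul_eq_sum (A B : Matrix m n ℝ) :
    trace (Aᵀ * B) = ∑ p : m × n, A p.1 p.2 * B p.1 p.2 := by
  rw [Fintype.sum_prod_type, Finset.sum_comm]
  rfl

lemma frob_eq_sqrt_sum (A : Matrix m n ℝ) : frob A = √(∑ p : m × n, A p.1 p.2 ^ 2) := by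
  rw [frob, Fintype.sum_prod_type]

lemma abs_trace_transpose_mul_le (A B : Matrix m n ℝ) :
    |trace (Aᵀ * B)| ≤ frob A * frob B := by
  rw [trace_transpose_mul_eq_sum, frob_eq_sqrt_sum, frob_eq_sqrt_sum,
    ← Real.sqrt_mul (Finset.sum_nonneg fun _ _ => sq_nonneg _)]
  exact Real.abs_le_sqrt (Finset.sum_mul_sq_le_sq_mul_sq _ _ _)

lemma frob_sq_eq_trace (A : Matrix m n ℝ) : frob A ^ 2 = trace (Aᵀ * A) := by
  rw [trace_transpose_mul_eq_sum, frob_eq_sqrt_sum, Real.sq_sqrt (by positivity)]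
  simp only [sq]

end Frobenius

lemma frob_conj_orthogonal {d : ℕ} {U : Mat d} (hU : IsOrtho U) (A : Mat d) :
    frob (Uᵀ * A * U) = frob A := by
  have hU' : U * Uᵀ = 1 := mul_eq_one_comm.mp hU
  have hgram : (Uᵀ * A * U)ᵀ * (Uᵀ * A * U) = Uᵀ * (Aᵀ * A) * U := by
    simp only [transpose_mul, transpose_transpose, Matrix.mul_assoc]
    rw [← Matrix.mul_assoc U Uᵀ, hU', Matrix.one_mul]
  have hsq : frob (Uᵀ * A * U) ^ 2 = frob A ^ 2 := by
    rw [frob_sq_eq_trace, frob_sq_eq_trace, hgram, trace_mul_cycle, hU', Matrix.one_mul]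
  exact (sq_eq_sq₀ (frob_nonneg _) (frob_nonneg _)).1 hsq

lemma frob_lowPart_le {d : ℕ} (A : Mat d) : frob (lowPart A) ≤ frob A := by
  refine Real.sqrt_le_sqrt (Finset.sum_le_sum fun i _ => Finset.sum_le_sum fun j _ => ?_)
  simp only [lowPart, of_apply]
  split_ifs
  · exact le_rfl
  · simpa using sq_nonneg (A i j)

lemma abs_trace_lowPart_transpose_mul_le {d : ℕ} (A B : Mat d) :
    |trace ((lowPart A)ᵀ * lowPart B)| ≤ frob A * frob B :=
  (abs_trace_transpose_mul_le _ _).trans <|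
    mul_le_mul (frob_lowPart_le A) (frob_lowPart_le B) (frob_nonneg _) (frob_nonneg _)

lemma frob_mcomm_le {d : ℕ} (A B : Mat d) : frob (mcomm A B) ≤ 2 * frob A * frob B := by
  calc frob (A * B - B * A) ≤ frob (A * B) + frob (B * A) := frob_sub_le _ _
    _ ≤ frob A * frob B + frob B * frob A :=
        add_le_add (frob_mul_le _ _) (frob_mul_le _ _)
    _ = 2 * frob A * frob B := by ring

lemma frob_mcomm_mcomm_le {d : ℕ} (A B C : Mat d) :
    frob (mcomm (mcomm A B) C) ≤ 4 * frob A * frob B * frob C := by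
  calc frob (mcomm (mcomm A B) C) ≤ 2 * frob (mcomm A B) * frob C := frob_mcomm_le _ _
    _ ≤ 2 * (2 * frob A * frob B) * frob C := by
        gcongr
        · exact frob_nonneg _
        · exact frob_mcomm_le _ _
    _ = 4 * frob A * frob B * frob C := by ring

lemma abs_trace_low_mcomm_mul_low_mcomm_mcomm_le {d : ℕ} (A X Y : Mat d) :
    |trace ((lowPart (mcomm A X))ᵀ * lowPart (mcomm (mcomm A Y) X))| ≤
      8 * frob X ^ 2 * frob Y * frob A ^ 2 := by
  calc _ ≤ frob (mcomm A X) * frob (mcomm (mcomm A Y) X) :=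
        abs_trace_lowPart_transpose_mul_le _ _
    _ ≤ (2 * frob A * frob X) * (4 * frob A * frob Y * frob X) :=
        mul_le_mul (frob_mcomm_le _ _) (frob_mcomm_mcomm_le _ _ _) (frob_nonneg _)
          (mul_nonneg (mul_nonneg zero_le_two (frob_nonneg _)) (frob_nonneg _))
    _ = 8 * frob X ^ 2 * frob Y * frob A ^ 2 := by ring

lemma abs_trace_low_mcomm_mcomm_mul_low_mcomm_le {d : ℕ} (A X Y : Mat d) :
    |trace ((lowPart (mcomm (mcomm A X) X))ᵀ * lowPart (mcomm A Y))| ≤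
      8 * frob X ^ 2 * frob Y * frob A ^ 2 := by
  calc _ ≤ frob (mcomm (mcomm A X) X) * frob (mcomm A Y) :=
        abs_trace_lowPart_transpose_mul_le _ _
    _ ≤ (4 * frob A * frob X * frob X) * (2 * frob A * frob Y) :=
        mul_le_mul (frob_mcomm_mcomm_le _ _ _) (frob_mcomm_le _ _) (frob_nonneg _)
          (mul_nonneg (mul_nonneg (mul_nonneg zero_le_four (frob_nonneg _)) (frob_nonneg _))
            (frob_nonneg _))
    _ = 8 * frob X ^ 2 * frob Y * frob A ^ 2 := by ring

theorem hessian_trace_bounds_general {d N : ℕ} (M : Fin N → Mat d) (U₀ : Mat d)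
    (hU₀ : ExactTriang U₀ M)
    (X Y : Mat d) (hYn : frob Y = 1) :
    |∑ n, Matrix.trace ((lowPart (mcomm (U₀ᵀ * M n * U₀) X))ᵀ *
        lowPart (mcomm (mcomm (U₀ᵀ * M n * U₀) Y) X))| ≤
      8 * frob X ^ 2 * ∑ n, frob (M n) ^ 2 ∧
    |∑ n, Matrix.trace ((lowPart (mcomm (mcomm (U₀ᵀ * M n * U₀) X) X))ᵀ *
        lowPart (mcomm (U₀ᵀ * M n * U₀) Y))| ≤
      8 * frob X ^ 2 * ∑ n, frob (M n) ^ 2 := by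
  have hconj : ∀ n, frob (U₀ᵀ * M n * U₀) = frob (M n) := fun n =>
    frob_conj_orthogonal hU₀.1 (M n)
  rw [Finset.mul_sum]
  constructor <;> refine (Finset.abs_sum_le_sum_abs _ _).trans (Finset.sum_le_sum fun n _ => ?_)
  · simpa only [hconj, hYn, mul_one] using
      abs_trace_low_mcomm_mul_low_mcomm_mcomm_le (U₀ᵀ * M n * U₀) X Y
  · simpa only [hconj, hYn, mul_one] using
      abs_trace_low_mcomm_mcomm_mul_low_mcomm_le (U₀ᵀ * M n * U₀) X Y

/-- upper bounds on the second-order trace terms appearing in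
the Hessian expansion. -/
theorem hessian_trace_bounds {d N : ℕ} (M : Fin N → Mat d) (U₀ : Mat d)
    (hU₀ : ExactTriang U₀ M)
    (X Y : Mat d) (hX : IsSkew X) (hY : IsSkew Y) (hYn : frob Y = 1) :
    |∑ n, Matrix.trace ((lowPart (mcomm (U₀ᵀ * M n * U₀) X))ᵀ *
        lowPart (mcomm (mcomm (U₀ᵀ * M n * U₀) Y) X))| ≤
      8 * frob X ^ 2 * ∑ n, frob (M n) ^ 2 ∧
    |∑ n, Matrix.trace ((lowPart (mcomm (mcomm (U₀ᵀ * M n * U₀) X) X))ᵀ *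
        lowPart (mcomm (U₀ᵀ * M n * U₀) Y))| ≤
      8 * frob X ^ 2 * ∑ n, frob (M n) ^ 2 :=
  hessian_trace_bounds_general M U₀ hU₀ X Y hYn
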